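/- For real σ ≥ 0 and real t with |t| ≥ 1, Re(log Γ(σ + it) − log Γ(it)) ≤ σ·log|t| + D·(σ + σ³)/t², for an absolute constant D. -/

import Mathlib

/-!
By Euler's limit formula `Γ(s) = lim n^s n! / ∏_{j ≤ n} (s + j)`, writing
`φ(v) = log |v + it|` (`logRadius t v`),
`log |Γ(σ + it)| - log |Γ(it)| = lim (σ log n - ∑_{j ≤ n} h(j))` with `h(u) = φ(u + σ) - φ(u)`.
The midpoint rule bounds `∫_{-1/2}^{n+1/2} h` by `∑_{j ≤ n} h(j) + ½ ∫ |h''|`, and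
`∫ |h''| ≤ 3πσ/t²` because `φ''` has total variation at most `3π/t²`. The integral of `h`
telescopes to `∫_{n+1/2}^{n+1/2+σ} φ - ∫_{-1/2}^{σ-1/2} φ`; the first piece is at least
`σ log n`, and the second at most `σ log |t| + σ (σ + 1/2)² / (2t²)` since
`φ(v) ≤ log |t| + v² / (2t²)`.
-/

open Real intervalIntegral Finset Filter Set
open scoped Nat Topology

section MidpointRule

variable {f f' f'' : ℝ → ℝ}

theorem abs_sub_le_integral_abs_of_hasDerivAt (hf : ∀ x, HasDerivAt f (f' x) x)
    (hf' : Continuous f') {a b x y : ℝ} (hx : x ∈ Icc a b) (hy : y ∈ Icc a b) :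
    |f y - f x| ≤ ∫ u in a..b, |f' u| := by
  have hab : a ≤ b := hx.1.trans hx.2
  rw [← integral_eq_sub_of_hasDerivAt (fun u _ => hf u) (hf'.intervalIntegrable _ _),
    integral_of_le hab, ← Real.norm_eq_abs]
  refine norm_integral_le_integral_norm_uIoc.trans (MeasureTheory.setIntegral_mono_set
    (hf'.norm.integrableOn_Icc.mono_set Ioc_subset_Icc_self)
    (.of_forall fun _ => norm_nonneg _) (.of_forall fun z hz => ?_))
  rcases mem_uIoc.1 hz with ⟨h₁, h₂⟩ | ⟨h₁, h₂⟩
  exacts [⟨hx.1.trans_lt h₁, h₂.trans hy.2⟩, ⟨hy.1.trans_lt h₁, h₂.trans hx.2⟩]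

theorem integral_le_two_mul_add_of_hasDerivAt (hf : ∀ x, HasDerivAt f (f' x) x)
    (hf' : ∀ x, HasDerivAt f' (f'' x) x) (hf'' : Continuous f'') (a : ℝ) {r : ℝ} (hr : 0 ≤ r) :
    ∫ u in (a - r)..(a + r), f u ≤ 2 * r * f a + 2 * r ^ 2 * ∫ u in (a - r)..(a + r), |f'' u| := by
  set M := ∫ u in (a - r)..(a + r), |f'' u|
  set tangent := fun u => f a + f' a * (u - a)
  have ha : a ∈ Icc (a - r) (a + r) := ⟨by linarith, by linarith⟩
  have hcont : Continuous fun u => f u - tangent u :=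
    (continuous_iff_continuousAt.2 fun x => (hf x).continuousAt).sub (by fun_prop)
  have hdev : ∀ u ∈ Icc (a - r) (a + r), f u - tangent u ≤ M * r := by
    intro u hu
    have hderiv : ∀ x ∈ Icc (a - r) (a + r),
        HasDerivWithinAt (fun v => f v - tangent v) (f' x - f' a) (Icc (a - r) (a + r)) x :=
      fun x _ => ((hf x).sub ((((hasDerivAt_id x).sub_const a).const_mul (f' a)).const_add
        (f a))).hasDerivWithinAt.congr_deriv (by simp)
    have h := (convex_Icc _ _).norm_image_sub_le_of_norm_hasDerivWithin_le hderiv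
      (fun x hx => abs_sub_le_integral_abs_of_hasDerivAt hf' hf'' ha hx) ha hu
    have hur : ‖u - a‖ ≤ r := abs_sub_le_iff.2 ⟨by linarith [hu.2], by linarith [hu.1]⟩
    have hM : 0 ≤ M := integral_nonneg (by linarith) fun _ _ => abs_nonneg _
    simp only [tangent, sub_self, mul_zero, add_zero, sub_zero] at h
    exact (le_abs_self _).trans (h.trans (mul_le_mul_of_nonneg_left hur hM))
  have htangent : ∫ u in (a - r)..(a + r), tangent u = 2 * r * f a := by
    rw [integral_add intervalIntegrable_const
      ((by fun_prop : Continuous fun u => f' a * (u - a)).intervalIntegrable _ _),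
      integral_const_mul, integral_comp_sub_right (fun x => x), integral_id, integral_const,
      smul_eq_mul]
    ring
  calc ∫ u in (a - r)..(a + r), f u
      = (∫ u in (a - r)..(a + r), (f u - tangent u)) + ∫ u in (a - r)..(a + r), tangent u := by
        rw [← integral_add (hcont.intervalIntegrable _ _)
          ((by fun_prop : Continuous tangent).intervalIntegrable _ _)]
        simp
    _ ≤ (∫ _ in (a - r)..(a + r), M * r) + 2 * r * f a := by
        rw [htangent]
        gcongr
        exact integral_mono_on (by linarith) (hcont.intervalIntegrable _ _)
          intervalIntegrable_const hdev
    _ = 2 * r * f a + 2 * r ^ 2 * M := by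
        rw [integral_const, smul_eq_mul]; ring

theorem sum_integral_unit_intervals {g : ℝ → ℝ} (hg : Continuous g) (n : ℕ) :
    ∑ j ∈ range (n + 1), ∫ u in ((j : ℝ) - 1 / 2)..(j + 1 / 2), g u
      = ∫ u in (-(1 / 2) : ℝ)..(n + 1 / 2), g u := by
  induction n with
  | zero => norm_num
  | succ n ih =>
    rw [sum_range_succ, ih, show ((n + 1 : ℕ) : ℝ) - 1 / 2 = n + 1 / 2 by push_cast; ring,
      integral_add_adjacent_intervals (hg.intervalIntegrable _ _) (hg.intervalIntegrable _ _)]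

theorem integral_le_sum_add_of_hasDerivAt (hf : ∀ x, HasDerivAt f (f' x) x)
    (hf' : ∀ x, HasDerivAt f' (f'' x) x) (hf'' : Continuous f'') (n : ℕ) :
    ∫ u in (-(1 / 2) : ℝ)..(n + 1 / 2), f u
      ≤ ∑ j ∈ range (n + 1), f j + 1 / 2 * ∫ u in (-(1 / 2) : ℝ)..(n + 1 / 2), |f'' u| := by
  have hcont : Continuous f := continuous_iff_continuousAt.2 fun x => (hf x).continuousAt
  rw [← sum_integral_unit_intervals hcont, ← sum_integral_unit_intervals hf''.abs, mul_sum,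
    ← sum_add_distrib]
  gcongr with j
  have h := integral_le_two_mul_add_of_hasDerivAt hf hf' hf'' j (by norm_num : (0 : ℝ) ≤ 1 / 2)
  norm_num at h ⊢
  exact h

end MidpointRule

section Shift

variable {f g : ℝ → ℝ}

theorem integral_comp_add_right_sub_self (hf : Continuous f) (a b σ : ℝ) :
    ∫ u in a..b, (f (u + σ) - f u) = (∫ u in b..b + σ, f u) - ∫ u in a..a + σ, f u := by
  rw [integral_sub ((by fun_prop : Continuous fun u => f (u + σ)).intervalIntegrable _ _)
    (hf.intervalIntegrable _ _), integral_comp_add_right f σ,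
    integral_interval_sub_interval_comm' (hf.intervalIntegrable _ _)
      (hf.intervalIntegrable _ _) (hf.intervalIntegrable _ _)]

theorem abs_sub_le_sub_of_abs_deriv_le {f' g' : ℝ → ℝ} (hf : ∀ x, HasDerivAt f (f' x) x)
    (hg : ∀ x, HasDerivAt g (g' x) x) (hfg : ∀ x, |f' x| ≤ g' x) {x y : ℝ} (hxy : x ≤ y) :
    |f y - f x| ≤ g y - g x := by
  have hsub : Monotone (g - f) := monotone_of_hasDerivAt_nonneg (fun x => (hg x).sub (hf x))
    fun x => sub_nonneg.2 ((le_abs_self _).trans (hfg x))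
  have hadd : Monotone (g + f) := monotone_of_hasDerivAt_nonneg (fun x => (hg x).add (hf x))
    fun x => show 0 ≤ g' x + f' x by linarith [neg_le_abs (f' x), hfg x]
  have h₁ := hsub hxy
  have h₂ := hadd hxy
  simp only [Pi.sub_apply, Pi.add_apply] at h₁ h₂
  exact abs_sub_le_iff.2 ⟨by linarith, by linarith⟩

theorem integral_abs_comp_add_right_sub_le (hf : Continuous f) (hg : Continuous g)
    (hfg : ∀ x y, x ≤ y → |f y - f x| ≤ g y - g x) {a b σ : ℝ} (hab : a ≤ b) (hσ : 0 ≤ σ) :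
    ∫ u in a..b, |f (u + σ) - f u| ≤ σ * (g (b + σ) - g a) := by
  have hmono : Monotone g := fun x y hxy => sub_nonneg.1 ((abs_nonneg _).trans (hfg x y hxy))
  have hright : ∫ u in b..b + σ, g u ≤ ∫ _ in b..b + σ, g (b + σ) :=
    integral_mono_on (le_add_of_nonneg_right hσ) (hg.intervalIntegrable _ _)
      intervalIntegrable_const fun u hu => hmono hu.2
  have hleft : ∫ _ in a..a + σ, g a ≤ ∫ u in a..a + σ, g u :=
    integral_mono_on (le_add_of_nonneg_right hσ) intervalIntegrable_const
      (hg.intervalIntegrable _ _) fun u hu => hmono hu.1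
  simp only [integral_const, add_sub_cancel_left, smul_eq_mul] at hright hleft
  calc ∫ u in a..b, |f (u + σ) - f u|
      ≤ ∫ u in a..b, (g (u + σ) - g u) :=
        integral_mono_on hab (Continuous.intervalIntegrable (by fun_prop) _ _)
          (Continuous.intervalIntegrable (by fun_prop) _ _) fun u _ => hfg u (u + σ) (by linarith)
    _ = (∫ u in b..b + σ, g u) - ∫ u in a..a + σ, g u := integral_comp_add_right_sub_self hg a b σ
    _ ≤ σ * (g (b + σ) - g a) := by linarith

end Shift

section LogRadius

variable {t : ℝ}

noncomputable def logRadius (t v : ℝ) : ℝ := log (v ^ 2 + t ^ 2) / 2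
noncomputable def logRadiusDeriv (t v : ℝ) : ℝ := v / (v ^ 2 + t ^ 2)
noncomputable def logRadiusDeriv2 (t v : ℝ) : ℝ := (t ^ 2 - v ^ 2) / (v ^ 2 + t ^ 2) ^ 2

theorem log_norm_add_mul_I (v t : ℝ) : log ‖(v : ℂ) + t * Complex.I‖ = logRadius t v := by
  rw [Complex.norm_add_mul_I, log_sqrt (by positivity), logRadius]

theorem hasDerivAt_logRadius (ht : t ≠ 0) (v : ℝ) :
    HasDerivAt (logRadius t) (logRadiusDeriv t v) v := by
  have hpos : 0 < v ^ 2 + t ^ 2 := by positivity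
  refine ((((hasDerivAt_pow 2 v).add_const (t ^ 2)).log hpos.ne').div_const 2).congr_deriv ?_
  rw [logRadiusDeriv]
  field_simp
  ring

theorem hasDerivAt_logRadiusDeriv (ht : t ≠ 0) (v : ℝ) :
    HasDerivAt (logRadiusDeriv t) (logRadiusDeriv2 t v) v := by
  have hpos : 0 < v ^ 2 + t ^ 2 := by positivity
  refine ((hasDerivAt_id v).div ((hasDerivAt_pow 2 v).add_const (t ^ 2)) hpos.ne').congr_deriv ?_
  simp only [logRadiusDeriv2, id]
  field_simp
  ring

theorem hasDerivAt_logRadiusDeriv2 (ht : t ≠ 0) (v : ℝ) :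
    HasDerivAt (logRadiusDeriv2 t) (2 * v * (v ^ 2 - 3 * t ^ 2) / (v ^ 2 + t ^ 2) ^ 3) v := by
  have hpos : 0 < v ^ 2 + t ^ 2 := by positivity
  refine (((hasDerivAt_pow 2 v).const_sub (t ^ 2)).div
    (((hasDerivAt_pow 2 v).add_const (t ^ 2)).pow 2) (pow_ne_zero 2 hpos.ne')).congr_deriv ?_
  simp only [Pi.pow_apply]
  field_simp
  ring

theorem abs_deriv_logRadiusDeriv2_le (ht : t ≠ 0) (v : ℝ) :
    |2 * v * (v ^ 2 - 3 * t ^ 2) / (v ^ 2 + t ^ 2) ^ 3| ≤ 3 / (|t| * (v ^ 2 + t ^ 2)) := by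
  have hpos : 0 < v ^ 2 + t ^ 2 := by positivity
  have hamgm : 2 * |v| * |t| ≤ v ^ 2 + t ^ 2 := by
    nlinarith [sq_abs v, sq_abs t, sq_nonneg (|v| - |t|)]
  have hnum : |v ^ 2 - 3 * t ^ 2| ≤ 3 * (v ^ 2 + t ^ 2) :=
    abs_le.2 ⟨by nlinarith, by nlinarith⟩
  rw [abs_div, abs_of_pos (pow_pos hpos 3), abs_mul, abs_mul, abs_two,
    div_le_div_iff₀ (pow_pos hpos 3) (by positivity)]
  calc 2 * |v| * |v ^ 2 - 3 * t ^ 2| * (|t| * (v ^ 2 + t ^ 2))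
      ≤ 2 * |v| * (3 * (v ^ 2 + t ^ 2)) * (|t| * (v ^ 2 + t ^ 2)) := by gcongr
    _ = 3 * (2 * |v| * |t|) * (v ^ 2 + t ^ 2) ^ 2 := by ring
    _ ≤ 3 * (v ^ 2 + t ^ 2) * (v ^ 2 + t ^ 2) ^ 2 := by gcongr
    _ = 3 * (v ^ 2 + t ^ 2) ^ 3 := by ring

theorem hasDerivAt_arctan_div_abs (ht : t ≠ 0) (v : ℝ) :
    HasDerivAt (fun v => 3 / t ^ 2 * arctan (v / |t|)) (3 / (|t| * (v ^ 2 + t ^ 2))) v := by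
  have habs : 0 < |t| := abs_pos.2 ht
  refine (((hasDerivAt_arctan (v / |t|)).comp v ((hasDerivAt_id v).div_const |t|)).const_mul
    (3 / t ^ 2)).congr_deriv ?_
  rw [← sq_abs t]
  field_simp
  ring

theorem integral_abs_logRadiusDeriv2_comp_add_right_sub_le (ht : t ≠ 0) {a b σ : ℝ} (hab : a ≤ b)
    (hσ : 0 ≤ σ) :
    ∫ u in a..b, |logRadiusDeriv2 t (u + σ) - logRadiusDeriv2 t u| ≤ 3 * π * σ / t ^ 2 := by
  have hderiv := hasDerivAt_logRadiusDeriv2 ht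
  -- a bounded majorant of the variation of `logRadiusDeriv2`, with total range `3π/t²`
  have hbound := hasDerivAt_arctan_div_abs ht
  refine (integral_abs_comp_add_right_sub_le
    (continuous_iff_continuousAt.2 fun x => (hderiv x).continuousAt)
    (continuous_iff_continuousAt.2 fun x => (hbound x).continuousAt)
    (fun x y hxy => abs_sub_le_sub_of_abs_deriv_le hderiv hbound
      (abs_deriv_logRadiusDeriv2_le ht) hxy) hab hσ).trans ?_
  have hπ : arctan ((b + σ) / |t|) - arctan (a / |t|) ≤ π := by
    linarith [arctan_lt_pi_div_two ((b + σ) / |t|), neg_pi_div_two_lt_arctan (a / |t|)]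
  calc σ * (3 / t ^ 2 * arctan ((b + σ) / |t|) - 3 / t ^ 2 * arctan (a / |t|))
      = 3 * σ / t ^ 2 * (arctan ((b + σ) / |t|) - arctan (a / |t|)) := by ring
    _ ≤ 3 * σ / t ^ 2 * π := by gcongr
    _ = 3 * π * σ / t ^ 2 := by ring

theorem continuous_logRadius (ht : t ≠ 0) : Continuous (logRadius t) :=
  continuous_iff_continuousAt.2 fun v => (hasDerivAt_logRadius ht v).continuousAt

theorem log_le_logRadius {v : ℝ} (hv : 0 < v) (t : ℝ) : log v ≤ logRadius t v := by
  have h : log (v ^ 2) ≤ log (v ^ 2 + t ^ 2) := log_le_log (by positivity) (by nlinarith)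
  rw [log_pow] at h
  rw [logRadius]
  push_cast at h
  linarith

theorem logRadius_le (ht : t ≠ 0) (v : ℝ) : logRadius t v ≤ log |t| + v ^ 2 / (2 * t ^ 2) := by
  have ht2 : 0 < t ^ 2 := by positivity
  have h : log ((v ^ 2 + t ^ 2) / t ^ 2) ≤ (v ^ 2 + t ^ 2) / t ^ 2 - 1 :=
    log_le_sub_one_of_pos (by positivity)
  rw [log_div (by positivity) ht2.ne', ← sq_abs t, log_pow, sq_abs] at h
  have hsplit : (v ^ 2 + t ^ 2) / t ^ 2 - 1 = v ^ 2 / t ^ 2 := by field_simp; ring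
  rw [logRadius, show v ^ 2 / (2 * t ^ 2) = v ^ 2 / t ^ 2 / 2 by ring]
  push_cast at h
  linarith

theorem mul_log_le_integral_logRadius (ht : t ≠ 0) {x σ : ℝ} (hx : 0 < x) (hσ : 0 ≤ σ) :
    σ * log x ≤ ∫ v in x..x + σ, logRadius t v := by
  have h : ∫ _ in x..x + σ, log x ≤ ∫ v in x..x + σ, logRadius t v :=
    integral_mono_on (le_add_of_nonneg_right hσ) intervalIntegrable_const
      ((continuous_logRadius ht).intervalIntegrable _ _) fun v hv =>
        (log_le_log hx hv.1).trans (log_le_logRadius (hx.trans_le hv.1) t)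
  simpa using h

theorem integral_logRadius_le (ht : t ≠ 0) {σ : ℝ} (hσ : 0 ≤ σ) :
    ∫ v in -(1 / 2)..-(1 / 2) + σ, logRadius t v
      ≤ σ * (log |t| + (σ + 1 / 2) ^ 2 / (2 * t ^ 2)) := by
  have h : ∫ v in -(1 / 2)..-(1 / 2) + σ, logRadius t v
      ≤ ∫ _ in -(1 / 2)..-(1 / 2) + σ, (log |t| + (σ + 1 / 2) ^ 2 / (2 * t ^ 2)) := by
    refine integral_mono_on (le_add_of_nonneg_right hσ)
      ((continuous_logRadius ht).intervalIntegrable _ _) intervalIntegrable_const fun v hv => ?_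
    have hv2 : v ^ 2 ≤ (σ + 1 / 2) ^ 2 := sq_le_sq' (by linarith [hv.1]) (by linarith [hv.2])
    exact (logRadius_le ht v).trans (by gcongr)
  rwa [integral_const, smul_eq_mul, add_sub_cancel_left] at h

theorem mul_log_sub_sum_logRadius_le (ht : t ≠ 0) {σ : ℝ} (hσ : 0 ≤ σ) {n : ℕ} (hn : n ≠ 0) :
    σ * log n - ∑ j ∈ range (n + 1), (logRadius t (j + σ) - logRadius t j)
      ≤ σ * log |t| + 6 * (σ + σ ^ 3) / t ^ 2 := by
  have hmid := integral_le_sum_add_of_hasDerivAt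
    (f := fun u => logRadius t (u + σ) - logRadius t u)
    (f'' := fun u => logRadiusDeriv2 t (u + σ) - logRadiusDeriv2 t u)
    (fun x => ((hasDerivAt_logRadius ht (x + σ)).comp_add_const x σ).sub
      (hasDerivAt_logRadius ht x))
    (fun x => ((hasDerivAt_logRadiusDeriv ht (x + σ)).comp_add_const x σ).sub
      (hasDerivAt_logRadiusDeriv ht x))
    (continuous_iff_continuousAt.2 fun x =>
      (((hasDerivAt_logRadiusDeriv2 ht (x + σ)).comp_add_const x σ).sub
        (hasDerivAt_logRadiusDeriv2 ht x)).continuousAt) n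
  have hvar := integral_abs_logRadiusDeriv2_comp_add_right_sub_le ht
    (a := -(1 / 2)) (b := n + 1 / 2) (by linarith [(Nat.cast_nonneg n : (0 : ℝ) ≤ n)]) hσ
  rw [integral_comp_add_right_sub_self (continuous_logRadius ht)] at hmid
  have hright := mul_log_le_integral_logRadius ht (x := n + 1 / 2) (by positivity) hσ
  have hn' : (0 : ℝ) < n := Nat.cast_pos.2 (Nat.pos_of_ne_zero hn)
  have hlog : σ * log n ≤ σ * log (n + 1 / 2) :=
    mul_le_mul_of_nonneg_left (log_le_log hn' (by linarith)) hσ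
  have hleft := integral_logRadius_le ht hσ
  have herror : σ * ((σ + 1 / 2) ^ 2 / (2 * t ^ 2)) + 1 / 2 * (3 * π * σ / t ^ 2)
      ≤ 6 * (σ + σ ^ 3) / t ^ 2 := by
    rw [show σ * ((σ + 1 / 2) ^ 2 / (2 * t ^ 2)) + 1 / 2 * (3 * π * σ / t ^ 2)
      = (σ * (σ + 1 / 2) ^ 2 / 2 + 3 / 2 * π * σ) / t ^ 2 by ring]
    gcongr
    nlinarith [mul_nonneg hσ (sq_nonneg (σ - 1)), mul_le_mul_of_nonneg_left pi_lt_d2.le hσ]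
  linarith

end LogRadius

theorem Complex.log_norm_GammaSeq {s : ℂ} (hs : ∀ j : ℕ, s + j ≠ 0) {n : ℕ} (hn : n ≠ 0) :
    Real.log ‖GammaSeq s n‖
      = s.re * Real.log n + Real.log n ! - ∑ j ∈ range (n + 1), Real.log ‖s + j‖ := by
  have hn' : (0 : ℝ) < n := Nat.cast_pos.2 (Nat.pos_of_ne_zero hn)
  have hprod : ∏ j ∈ range (n + 1), ‖s + j‖ ≠ 0 :=
    prod_ne_zero_iff.2 fun j _ => norm_ne_zero_iff.2 (hs j)
  rw [GammaSeq, norm_div, norm_mul, ← ofReal_natCast, norm_cpow_eq_rpow_re_of_pos hn',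
    norm_natCast, norm_prod, Real.log_div (mul_ne_zero (by positivity) (by positivity)) hprod,
    Real.log_mul (by positivity) (by positivity), Real.log_rpow hn',
    Real.log_prod fun j _ => norm_ne_zero_iff.2 (hs j)]

theorem log_norm_Gamma_add_mul_I_sub_le {σ t : ℝ} (ht : t ≠ 0) (hσ : 0 ≤ σ) :
    log ‖Complex.Gamma (σ + t * Complex.I)‖ - log ‖Complex.Gamma (t * Complex.I)‖
      ≤ σ * log |t| + 6 * (σ + σ ^ 3) / t ^ 2 := by
  have hne : ∀ s : ℂ, s.im = t → ∀ j : ℕ, s + j ≠ 0 := fun s hs j h =>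
    ht (by simpa [hs] using congrArg Complex.im h)
  have hlim : ∀ s : ℂ, s.im = t →
      Tendsto (fun n => log ‖Complex.GammaSeq s n‖) atTop (𝓝 (log ‖Complex.Gamma s‖)) :=
    fun s hs => (Complex.GammaSeq_tendsto_Gamma s).norm.log <| norm_ne_zero_iff.2 <|
      Complex.Gamma_ne_zero fun m h => hne s hs m (by rw [h, neg_add_cancel])
  refine le_of_tendsto ((hlim _ (by simp)).sub (hlim _ (by simp))) ?_
  filter_upwards [eventually_ne_atTop 0] with n hn
  have hterm : ∀ x : ℝ, ∀ j : ℕ,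
      log ‖(x : ℂ) + t * Complex.I + j‖ = logRadius t (j + x) := fun x j => by
    rw [← log_norm_add_mul_I]; congr 2; push_cast; ring
  have hterm₀ : ∀ j : ℕ, log ‖(t : ℂ) * Complex.I + j‖ = logRadius t j := fun j => by
    simpa using hterm 0 j
  have hre : ((σ : ℂ) + t * Complex.I).re = σ := by simp
  have hre₀ : ((t : ℂ) * Complex.I).re = 0 := by simp
  rw [Complex.log_norm_GammaSeq (hne _ (by simp)) hn,
    Complex.log_norm_GammaSeq (hne _ (by simp)) hn, hre, hre₀]
  simp only [hterm, hterm₀]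
  have key := mul_log_sub_sum_logRadius_le ht hσ hn
  rw [sum_sub_distrib] at key
  linarith

theorem stmt_14 :
    ∃ D > (0 : ℝ), ∀ σ t : ℝ, 0 ≤ σ → 1 ≤ |t| →
      (Complex.log (Complex.Gamma ((σ : ℂ) + (t : ℂ) * Complex.I)) -
        Complex.log (Complex.Gamma ((t : ℂ) * Complex.I))).re
        ≤ σ * Real.log |t| + D * (σ + σ ^ 3) / t ^ 2 := by
  refine ⟨6, by norm_num, fun σ t hσ ht => ?_⟩
  rw [Complex.sub_re, Complex.log_re, Complex.log_re]
  exact log_norm_Gamma_add_mul_I_sub_le (abs_pos.1 (one_pos.trans_le ht)) hσ
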